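/- Let F : V(a,b,r₁,r₂,n) → W be a diffeomorphism of order (β, p) with β > 1 and p ≥ 1. Then there exist r₁′, r₂′ > 0 such that V(a,b,r₁′,r₂′,n) is contained in the image of F, and the inverse F^{-1} is a diffeomorphism of order (β, p) on V(a,b,r₁′,r₂′,n). -/

import Mathlib

open Set Metric

/-- The sector-product domain `V(a,b,r₁,r₂,n) ⊆ ℂ* × ℂⁿ` (no restriction on the argument
when `a = −π` and `b = π`). -/
def Sector (a b r₁ r₂ : ℝ) (n : ℕ) : Set (ℂ × (Fin n → ℂ)) :=
  {z | z.1 ≠ 0 ∧ ‖z.1‖ < r₁ ∧ ‖z.2‖ < r₂ ∧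
    ((a = -Real.pi ∧ b = Real.pi) ∨ (a < z.1.arg ∧ z.1.arg < b))}

/-- `f : V → F` is of order `(α, p)` at the origin: for every `k ≤ p`, the `k`-th order
derivative `g` of `f` (taken within `V`) satisfies that `|x|^{k−α} ‖g(x,y)‖` is bounded
near the origin of `ℂ^{n+1}`. -/
def IsOrderOn {n : ℕ} {F : Type*} [NormedAddCommGroup F] [NormedSpace ℝ F]
    (V : Set (ℂ × (Fin n → ℂ))) (f : ℂ × (Fin n → ℂ) → F) (α : ℝ) (p : ℕ) : Prop :=
  ∀ k ≤ p, ∃ C ε : ℝ, 0 < ε ∧ ∀ z ∈ V, ‖z‖ < ε →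
    ‖z.1‖ ^ ((k : ℝ) - α) * ‖iteratedFDerivWithin ℝ k f V z‖ ≤ C


/-- `F` is a diffeomorphism of order `(β, p)` on `V`: it is a smooth diffeomorphism onto its
image, preserves the `x`-coordinate (`x ∘ F ≡ x`), and `F − id` is of order `(β, p)`. -/
def IsDiffeoOrder {n : ℕ} (V : Set (ℂ × (Fin n → ℂ)))
    (F : ℂ × (Fin n → ℂ) → ℂ × (Fin n → ℂ)) (β : ℝ) (p : ℕ) : Prop :=
  ContDiffOn ℝ (⊤ : ℕ∞) F V ∧ Set.InjOn F V ∧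
  (∀ z ∈ V, (F z).1 = z.1) ∧
  IsOrderOn V (fun z => F z - z) β p




universe u

lemma comp_order {E : Type u} [NormedAddCommGroup E] [NormedSpace ℝ E]
    {S T : Set E} (hS : IsOpen S) (hT : IsOpen T)
    {G : E → E} (hG : ContDiffOn ℝ (⊤ : ℕ∞) G S) (hGT : Set.MapsTo G S T)
    {χ : E → ℝ} (hχ : ∀ z ∈ S, 0 < χ z) {M : ℝ} (hM : 0 ≤ M) :
    ∀ (k : ℕ), (∀ j, j < k → ∀ z ∈ S,
        ‖iteratedFDerivWithin ℝ j (fderivWithin ℝ G S) S z‖ ≤ M * χ z ^ (-(j:ℝ))) →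
    ∀ (W : Type u) (instW : NormedAddCommGroup W) (instW2 : @NormedSpace ℝ W _ instW.toSeminormedAddCommGroup)
      (u : E → W) (hu : ContDiffOn ℝ (⊤ : ℕ∞) u T) (δ : ℝ) (C : ℝ) (hC0 : 0 ≤ C),
      (∀ i, i ≤ k → ∀ z ∈ S, ‖iteratedFDerivWithin ℝ i u T (G z)‖ ≤ C * χ z ^ (δ - i)) →
      ∃ C', 0 ≤ C' ∧ ∀ i, i ≤ k → ∀ z ∈ S,
        ‖iteratedFDerivWithin ℝ i (u ∘ G) S z‖ ≤ C' * χ z ^ (δ - i) := by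
  intro k
  induction k with
  | zero =>
    intro _ W instW instW2 u hu δ C hC0 hC
    refine ⟨C, hC0, ?_⟩
    intro i hi z hz
    interval_cases i
    rw [norm_iteratedFDerivWithin_zero]
    have := hC 0 le_rfl z hz
    rwa [norm_iteratedFDerivWithin_zero] at this
  | succ k ih =>
    intro hDG W instW instW2 u hu δ C hC0 hC
    set u' : E → (E →L[ℝ] W) := fderivWithin ℝ u T with hu'def
    have htop : ((⊤ : ℕ∞) : WithTop ℕ∞) + 1 ≤ ((⊤ : ℕ∞) : WithTop ℕ∞) :=
      le_of_eq (by rw [← WithTop.coe_one, ← WithTop.coe_add, top_add])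
    have hu' : ContDiffOn ℝ (⊤ : ℕ∞) u' T := hu.fderivWithin hT.uniqueDiffOn htop
    have hC' : ∀ i, i ≤ k → ∀ z ∈ S, ‖iteratedFDerivWithin ℝ i u' T (G z)‖
        ≤ C * χ z ^ ((δ - 1) - i) := by
      intro i hi z hz
      have := hC (i+1) (by omega) z hz
      rw [← norm_iteratedFDerivWithin_fderivWithin hT.uniqueDiffOn (hGT hz)] at this
      have harg : δ - ((i:ℕ)+1:ℕ) = (δ - 1) - (i:ℝ) := by push_cast; ring
      rwa [harg] at this
    obtain ⟨C₁, hC₁0, hC₁⟩ := ih (fun j hj => hDG j (by omega)) _ _ _ u' hu' (δ - 1) C hC0 hC'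
    refine ⟨max C ((2:ℝ)^k * (C₁ * M)), le_max_of_le_left hC0, ?_⟩
    intro i hi z hz
    have hχz := hχ z hz
    match i with
    | 0 =>
      rw [norm_iteratedFDerivWithin_zero]
      have := hC 0 (by omega) z hz
      rw [norm_iteratedFDerivWithin_zero] at this
      refine this.trans (mul_le_mul_of_nonneg_right (le_max_left _ _) ?_)
      positivity
    | (j+1) =>
      have hj : j ≤ k := by omega
      -- rewrite as derivative of fderivWithin
      rw [← norm_iteratedFDerivWithin_fderivWithin hS.uniqueDiffOn hz]
      have heq : EqOn (fderivWithin ℝ (u ∘ G) S)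
          (fun y => (ContinuousLinearMap.compL ℝ E E W) ((u' ∘ G) y) (fderivWithin ℝ G S y)) S := by
        intro y hy
        exact fderivWithin_comp y ((hu.differentiableOn (by simp)) (G y) (hGT hy))
          ((hG.differentiableOn (by simp)) y hy) hGT (hS.uniqueDiffOn y hy)
      rw [iteratedFDerivWithin_congr heq hz j]
      have hbil := (ContinuousLinearMap.compL ℝ E E W).norm_iteratedFDerivWithin_le_of_bilinear
        (f := u' ∘ G) (g := fderivWithin ℝ G S)
        (hu'.comp hG hGT) (hG.fderivWithin hS.uniqueDiffOn htop) hS.uniqueDiffOn hz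
        (n := j) (by exact_mod_cast le_top)
      refine hbil.trans ?_
      have hterm : ∀ l ∈ Finset.range (j+1),
          (j.choose l : ℝ) * ‖iteratedFDerivWithin ℝ l (u' ∘ G) S z‖ *
            ‖iteratedFDerivWithin ℝ (j - l) (fderivWithin ℝ G S) S z‖
          ≤ (j.choose l : ℝ) * (C₁ * M * χ z ^ (δ - (j+1:ℕ))) := by
        intro l hl
        rw [Finset.mem_range] at hl
        have hl' : l ≤ k := by omega
        have h1 := hC₁ l (by omega) z hz
        have h2 := hDG (j - l) (by omega) z hz
        have hcast : (((j - l : ℕ)) : ℝ) = (j:ℝ) - l := by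
          push_cast [Nat.cast_sub (by omega : l ≤ j)]; ring
        rw [hcast] at h2
        have hmul : ‖iteratedFDerivWithin ℝ l (u' ∘ G) S z‖ *
            ‖iteratedFDerivWithin ℝ (j - l) (fderivWithin ℝ G S) S z‖
            ≤ (C₁ * χ z ^ ((δ-1) - l)) * (M * χ z ^ (-((j:ℝ) - l))) := by
          apply mul_le_mul h1 h2 (norm_nonneg _) (by positivity)
        calc (j.choose l : ℝ) * ‖iteratedFDerivWithin ℝ l (u' ∘ G) S z‖ *
              ‖iteratedFDerivWithin ℝ (j - l) (fderivWithin ℝ G S) S z‖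
            = (j.choose l : ℝ) * (‖iteratedFDerivWithin ℝ l (u' ∘ G) S z‖ *
              ‖iteratedFDerivWithin ℝ (j - l) (fderivWithin ℝ G S) S z‖) := by ring
          _ ≤ (j.choose l : ℝ) * ((C₁ * χ z ^ ((δ-1) - l)) * (M * χ z ^ (-((j:ℝ) - l)))) := by
              apply mul_le_mul_of_nonneg_left hmul (by positivity)
          _ = (j.choose l : ℝ) * (C₁ * M * (χ z ^ ((δ-1) - l) * χ z ^ (-((j:ℝ) - l)))) := by ring
          _ = (j.choose l : ℝ) * (C₁ * M * χ z ^ (δ - (j+1:ℕ))) := by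
              rw [← Real.rpow_add hχz]
              have hexp : δ - 1 - (l:ℝ) + -((j:ℝ) - l) = δ - ((j+1:ℕ):ℝ) := by
                push_cast; ring
              rw [hexp]
      have hsum0 : (0:ℝ) ≤ ∑ l ∈ Finset.range (j+1), (j.choose l : ℝ) *
          ‖iteratedFDerivWithin ℝ l (u' ∘ G) S z‖ *
          ‖iteratedFDerivWithin ℝ (j - l) (fderivWithin ℝ G S) S z‖ := by
        apply Finset.sum_nonneg; intro l _; positivity
      refine le_trans (mul_le_mul_of_nonneg_right
        (ContinuousLinearMap.norm_compL_le ℝ E E W) hsum0) ?_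
      rw [one_mul]
      refine le_trans (Finset.sum_le_sum hterm) ?_
      rw [← Finset.sum_mul]
      have hchoose : (∑ l ∈ Finset.range (j+1), (j.choose l : ℝ)) = (2:ℝ)^j := by
        exact_mod_cast congrArg (Nat.cast : ℕ → ℝ) (Nat.sum_range_choose j)
      rw [hchoose]
      have h2j : (2:ℝ)^j ≤ (2:ℝ)^k := pow_le_pow_right₀ (by norm_num) hj
      have hfin : (2:ℝ)^j * (C₁ * M) ≤ max C ((2:ℝ)^k * (C₁ * M)) :=
        le_trans (mul_le_mul_of_nonneg_right h2j (by positivity)) (le_max_right _ _)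
      calc (2:ℝ)^j * (C₁ * M * χ z ^ (δ - ((j+1:ℕ):ℝ)))
          = ((2:ℝ)^j * (C₁ * M)) * χ z ^ (δ - ((j+1:ℕ):ℝ)) := by ring
        _ ≤ max C ((2:ℝ)^k * (C₁ * M)) * χ z ^ (δ - ((j+1:ℕ):ℝ)) :=
            mul_le_mul_of_nonneg_right hfin (by positivity)

set_option maxHeartbeats 1000000 in
lemma DG_top {E : Type u} [NormedAddCommGroup E] [NormedSpace ℝ E]
    {S T : Set E} (hS : IsOpen S) (hT : IsOpen T)
    {G : E → E} (hG : ContDiffOn ℝ (⊤ : ℕ∞) G S) (hGT : Set.MapsTo G S T)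
    {χ : E → ℝ} (hχ : ∀ z ∈ S, 0 < χ z) (hχ1 : ∀ z ∈ S, χ z ≤ 1)
    {f : E → E} (hf : ContDiffOn ℝ (⊤ : ℕ∞) f T)
    (hid : ∀ z ∈ S, G z = z - f (G z))
    {β : ℝ} (hβ : 1 ≤ β) {C : ℝ} (hC0 : 0 ≤ C) (p : ℕ)
    (hfb : ∀ i, i ≤ p → ∀ z ∈ S, ‖iteratedFDerivWithin ℝ i f T (G z)‖ ≤ C * χ z ^ (β - i))
    (hsmall : ∀ z ∈ S, C * χ z ^ (β - 1) ≤ 1/2)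
    {M : ℝ} (hM : 0 ≤ M) (j : ℕ) (hjp : j + 1 ≤ p)
    (hDGlow : ∀ l, l < j → ∀ z ∈ S,
      ‖iteratedFDerivWithin ℝ l (fderivWithin ℝ G S) S z‖ ≤ M * χ z ^ (-(l:ℝ))) :
    ∃ M', 0 ≤ M' ∧ ∀ z ∈ S,
      ‖iteratedFDerivWithin ℝ j (fderivWithin ℝ G S) S z‖ ≤ M' * χ z ^ (-(j:ℝ)) := by
  classical
  set f' := fderivWithin ℝ f T with hf'def
  have htop : ((⊤ : ℕ∞) : WithTop ℕ∞) + 1 ≤ ((⊤ : ℕ∞) : WithTop ℕ∞) :=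
    le_of_eq (by rw [← WithTop.coe_one, ← WithTop.coe_add, top_add])
  have hf' : ContDiffOn ℝ (⊤ : ℕ∞) f' T := hf.fderivWithin hT.uniqueDiffOn htop
  have hf'b : ∀ i, i ≤ j → ∀ z ∈ S,
      ‖iteratedFDerivWithin ℝ i f' T (G z)‖ ≤ C * χ z ^ ((β-1) - i) := by
    intro i hi z hz
    have h := hfb (i+1) (by omega) z hz
    rw [← norm_iteratedFDerivWithin_fderivWithin hT.uniqueDiffOn (hGT hz)] at h
    have harg : β - ((i+1:ℕ):ℝ) = (β - 1) - (i:ℝ) := by push_cast; ring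
    rwa [harg] at h
  obtain ⟨C₂, hC₂0, hC₂⟩ := comp_order hS hT hG hGT hχ hM j hDGlow (E →L[ℝ] E) _ _ f' hf' (β-1) C hC0 hf'b
  set ψ : E → (E →L[ℝ] E) :=
    fun z => (ContinuousLinearMap.compL ℝ E E E) ((f' ∘ G) z) (fderivWithin ℝ G S z) with hψdef
  have hψ : ContDiffOn ℝ (⊤ : ℕ∞) ψ S :=
    (ContinuousLinearMap.compL ℝ E E E).isBoundedBilinearMap.contDiff.comp₂_contDiffOn
      (hf'.comp hG hGT) (hG.fderivWithin hS.uniqueDiffOn htop)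
  have heq : EqOn (fderivWithin ℝ G S)
      (fun z => (ContinuousLinearMap.id ℝ E) - ψ z) S := by
    intro z hz
    have hGz : fderivWithin ℝ G S z = fderivWithin ℝ (fun w => w - f (G w)) S z :=
      fderivWithin_congr (fun y hy => hid y hy) (hid z hz)
    have hdfG : DifferentiableWithinAt ℝ (f ∘ G) S z :=
      ((hf.differentiableOn (by simp)) (G z) (hGT hz)).comp z
        ((hG.differentiableOn (by simp)) z hz) hGT
    have hsub : fderivWithin ℝ (fun w => w - f (G w)) S z
        = fderivWithin ℝ (fun w => w) S z - fderivWithin ℝ (f ∘ G) S z := by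
      exact fderivWithin_sub (hS.uniqueDiffOn z hz) (differentiableWithinAt_id) hdfG
    have hcomp : fderivWithin ℝ (f ∘ G) S z
        = (fderivWithin ℝ f T (G z)).comp (fderivWithin ℝ G S z) :=
      fderivWithin_comp z ((hf.differentiableOn (by simp)) (G z) (hGT hz))
        ((hG.differentiableOn (by simp)) z hz) hGT (hS.uniqueDiffOn z hz)
    rw [hGz, hsub, fderivWithin_id' (hS.uniqueDiffOn z hz), hcomp]
    rfl
  refine ⟨2 * (1 + 2^j * (C₂ * M)), by positivity, ?_⟩
  intro z hz
  have hχz := hχ z hz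
  have hχz1 := hχ1 z hz
  have hone_le : (1:ℝ) ≤ χ z ^ (-(j:ℝ)) := by
    have := Real.rpow_le_rpow_of_exponent_ge hχz hχz1 (by simp : -(j:ℝ) ≤ 0)
    rwa [Real.rpow_zero] at this
  -- rewrite the derivative
  rw [iteratedFDerivWithin_congr heq hz j]
  have heq2 : EqOn (fun z => (ContinuousLinearMap.id ℝ E) - ψ z)
      (fun z => ContinuousLinearMap.id ℝ E + (-ψ) z) S := by
    intro y _; simp [sub_eq_add_neg]
  rw [iteratedFDerivWithin_congr heq2 hz j]
  rw [iteratedFDerivWithin_add_apply' (f := fun _ => ContinuousLinearMap.id ℝ E) (g := -ψ)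
      contDiffWithinAt_const ((hψ.neg.of_le (by exact_mod_cast le_top)) z hz) hS.uniqueDiffOn hz]
  have hnegeq : iteratedFDerivWithin ℝ j (-ψ) S z = -iteratedFDerivWithin ℝ j ψ S z :=
    iteratedFDerivWithin_neg_apply hS.uniqueDiffOn hz
  refine le_trans (norm_add_le _ _) ?_
  rw [hnegeq, norm_neg]
  have hconst : ‖iteratedFDerivWithin ℝ j (fun _ => ContinuousLinearMap.id ℝ E) S z‖ ≤ 1 := by
    rcases Nat.eq_zero_or_pos j with hj0 | hj0
    · subst hj0
      rw [norm_iteratedFDerivWithin_zero]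
      exact ContinuousLinearMap.norm_id_le
    · rw [iteratedFDerivWithin_const_of_ne (by omega) _ S]
      simp
  -- bilinear bound for ψ
  have hbil := (ContinuousLinearMap.compL ℝ E E E).norm_iteratedFDerivWithin_le_of_bilinear
    (f := f' ∘ G) (g := fderivWithin ℝ G S)
    (hf'.comp hG hGT) (hG.fderivWithin hS.uniqueDiffOn htop) hS.uniqueDiffOn hz (n := j) (by exact_mod_cast le_top)
  have hsum0 : (0:ℝ) ≤ ∑ l ∈ Finset.range (j+1), (j.choose l : ℝ) *
      ‖iteratedFDerivWithin ℝ l (f' ∘ G) S z‖ *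
      ‖iteratedFDerivWithin ℝ (j - l) (fderivWithin ℝ G S) S z‖ := by
    apply Finset.sum_nonneg; intro l _; positivity
  have hψb : ‖iteratedFDerivWithin ℝ j ψ S z‖ ≤
      ∑ l ∈ Finset.range (j+1), (j.choose l : ℝ) *
        ‖iteratedFDerivWithin ℝ l (f' ∘ G) S z‖ *
        ‖iteratedFDerivWithin ℝ (j - l) (fderivWithin ℝ G S) S z‖ := by
    refine hbil.trans ?_
    calc _ ≤ 1 * _ := mul_le_mul_of_nonneg_right (ContinuousLinearMap.norm_compL_le ℝ E E E) hsum0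
    _ = _ := one_mul _
  rw [Finset.sum_range_succ'] at hψb
  -- the l = 0 term
  have hzero_term : (j.choose 0 : ℝ) * ‖iteratedFDerivWithin ℝ 0 (f' ∘ G) S z‖ *
      ‖iteratedFDerivWithin ℝ (j - 0) (fderivWithin ℝ G S) S z‖ ≤
      (1/2) * ‖iteratedFDerivWithin ℝ j (fderivWithin ℝ G S) S z‖ := by
    have h0 : ‖iteratedFDerivWithin ℝ 0 (f' ∘ G) S z‖ = ‖f' (G z)‖ :=
      norm_iteratedFDerivWithin_zero
    have h1 : ‖f' (G z)‖ ≤ 1/2 := by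
      have e1 : ‖f' (G z)‖ = ‖iteratedFDerivWithin ℝ 0 f' T (G z)‖ :=
        norm_iteratedFDerivWithin_zero.symm
      have e2 := norm_iteratedFDerivWithin_fderivWithin (𝕜 := ℝ) (f := f) (n := 0) hT.uniqueDiffOn (hGT hz)
      have h3 := hfb 1 (by omega) z hz
      have h4 := hsmall z hz
      have harg : β - ((1:ℕ):ℝ) = β - 1 := by norm_num
      rw [harg] at h3
      calc ‖f' (G z)‖ = ‖iteratedFDerivWithin ℝ 1 f T (G z)‖ := by rw [e1, ← e2]
        _ ≤ C * χ z ^ (β - 1) := h3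
        _ ≤ 1/2 := h4
    rw [h0]
    simp only [Nat.choose_zero_right, Nat.cast_one, one_mul, Nat.sub_zero]
    exact mul_le_mul_of_nonneg_right h1 (norm_nonneg _)
  -- the other terms
  have hother : ∀ l ∈ Finset.range j, (j.choose (l+1) : ℝ) *
      ‖iteratedFDerivWithin ℝ (l+1) (f' ∘ G) S z‖ *
      ‖iteratedFDerivWithin ℝ (j - (l+1)) (fderivWithin ℝ G S) S z‖ ≤
      (j.choose (l+1) : ℝ) * (C₂ * M) * χ z ^ (-(j:ℝ)) := by
    intro l hl
    rw [Finset.mem_range] at hl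
    have h1 := hC₂ (l+1) (by omega) z hz
    have h2 := hDGlow (j - (l+1)) (by omega) z hz
    have hcast : ((j - (l+1) : ℕ) : ℝ) = (j:ℝ) - (l+1:ℝ) := by
      push_cast [Nat.cast_sub (by omega : l+1 ≤ j)]; ring
    rw [hcast] at h2
    have hprod : ‖iteratedFDerivWithin ℝ (l+1) (f' ∘ G) S z‖ *
        ‖iteratedFDerivWithin ℝ (j - (l+1)) (fderivWithin ℝ G S) S z‖ ≤
        (C₂ * χ z ^ ((β-1) - ((l+1:ℕ):ℝ))) * (M * χ z ^ (-((j:ℝ) - (l+1:ℝ)))) :=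
      mul_le_mul h1 h2 (norm_nonneg _) (by positivity)
    have hexp : χ z ^ ((β-1) - ((l+1:ℕ):ℝ)) * χ z ^ (-((j:ℝ) - (l+1:ℝ)))
        = χ z ^ (β - 1 - (j:ℝ)) := by
      rw [← Real.rpow_add hχz]
      congr 1
      push_cast; ring
    have hexp2 : χ z ^ (β - 1 - (j:ℝ)) ≤ χ z ^ (-(j:ℝ)) :=
      Real.rpow_le_rpow_of_exponent_ge hχz hχz1 (by linarith)
    calc (j.choose (l+1) : ℝ) * ‖iteratedFDerivWithin ℝ (l+1) (f' ∘ G) S z‖ *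
          ‖iteratedFDerivWithin ℝ (j - (l+1)) (fderivWithin ℝ G S) S z‖
        = (j.choose (l+1) : ℝ) * (‖iteratedFDerivWithin ℝ (l+1) (f' ∘ G) S z‖ *
          ‖iteratedFDerivWithin ℝ (j - (l+1)) (fderivWithin ℝ G S) S z‖) := by ring
      _ ≤ (j.choose (l+1) : ℝ) * ((C₂ * χ z ^ ((β-1) - ((l+1:ℕ):ℝ))) *
          (M * χ z ^ (-((j:ℝ) - (l+1:ℝ))))) :=
          mul_le_mul_of_nonneg_left hprod (by positivity)
      _ = (j.choose (l+1) : ℝ) * (C₂ * M) *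
          (χ z ^ ((β-1) - ((l+1:ℕ):ℝ)) * χ z ^ (-((j:ℝ) - (l+1:ℝ)))) := by ring
      _ = (j.choose (l+1) : ℝ) * (C₂ * M) * χ z ^ (β - 1 - (j:ℝ)) := by rw [hexp]
      _ ≤ (j.choose (l+1) : ℝ) * (C₂ * M) * χ z ^ (-(j:ℝ)) :=
          mul_le_mul_of_nonneg_left hexp2 (by positivity)
  have hsum_other : ∑ l ∈ Finset.range j, (j.choose (l+1) : ℝ) *
      ‖iteratedFDerivWithin ℝ (l+1) (f' ∘ G) S z‖ *
      ‖iteratedFDerivWithin ℝ (j - (l+1)) (fderivWithin ℝ G S) S z‖ ≤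
      2^j * (C₂ * M) * χ z ^ (-(j:ℝ)) := by
    refine le_trans (Finset.sum_le_sum hother) ?_
    rw [← Finset.sum_mul, ← Finset.sum_mul]
    have hb : (∑ l ∈ Finset.range j, (j.choose (l+1) : ℝ)) ≤ 2^j := by
      have h1 : (∑ l ∈ Finset.range j, j.choose (l+1)) ≤ 2^j := by
        have := Nat.sum_range_choose j
        have hsplit := Finset.sum_range_succ' (fun l => j.choose l) j
        omega
      exact_mod_cast h1
    refine mul_le_mul_of_nonneg_right (mul_le_mul_of_nonneg_right hb (by positivity)) (by positivity)
  -- put it together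
  set X := ‖iteratedFDerivWithin ℝ j (fderivWithin ℝ G S) S z‖ with hX
  have hfinal : X ≤ 1 + (2^j * (C₂ * M) * χ z ^ (-(j:ℝ)) + (1/2) * X) := by
    calc X ≤ ‖iteratedFDerivWithin ℝ j (fun _ => ContinuousLinearMap.id ℝ E) S z‖ +
        ‖iteratedFDerivWithin ℝ j ψ S z‖ := by
          rw [hX]
          rw [iteratedFDerivWithin_congr heq hz j, iteratedFDerivWithin_congr heq2 hz j]
          rw [iteratedFDerivWithin_add_apply' (f := fun _ => ContinuousLinearMap.id ℝ E) (g := -ψ)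
            contDiffWithinAt_const ((hψ.neg.of_le (by exact_mod_cast le_top)) z hz) hS.uniqueDiffOn hz]
          refine le_trans (norm_add_le _ _) ?_
          rw [hnegeq, norm_neg]
      _ ≤ 1 + (2^j * (C₂ * M) * χ z ^ (-(j:ℝ)) + (1/2) * X) := by
          refine add_le_add hconst ?_
          refine le_trans hψb ?_
          exact add_le_add hsum_other hzero_term
  nlinarith [hone_le, hfinal]

lemma DG_order {E : Type u} [NormedAddCommGroup E] [NormedSpace ℝ E]
    {S T : Set E} (hS : IsOpen S) (hT : IsOpen T)
    {G : E → E} (hG : ContDiffOn ℝ (⊤ : ℕ∞) G S) (hGT : Set.MapsTo G S T)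
    {χ : E → ℝ} (hχ : ∀ z ∈ S, 0 < χ z) (hχ1 : ∀ z ∈ S, χ z ≤ 1)
    {f : E → E} (hf : ContDiffOn ℝ (⊤ : ℕ∞) f T)
    (hid : ∀ z ∈ S, G z = z - f (G z))
    {β : ℝ} (hβ : 1 ≤ β) {C : ℝ} (hC0 : 0 ≤ C) (p : ℕ)
    (hfb : ∀ i, i ≤ p → ∀ z ∈ S, ‖iteratedFDerivWithin ℝ i f T (G z)‖ ≤ C * χ z ^ (β - i))
    (hsmall : ∀ z ∈ S, C * χ z ^ (β - 1) ≤ 1/2) :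
    ∀ k, k + 1 ≤ p → ∃ M, 0 ≤ M ∧ ∀ j, j ≤ k → ∀ z ∈ S,
      ‖iteratedFDerivWithin ℝ j (fderivWithin ℝ G S) S z‖ ≤ M * χ z ^ (-(j:ℝ)) := by
  intro k
  induction k with
  | zero =>
    intro hk
    obtain ⟨M', hM'0, hM'⟩ := DG_top hS hT hG hGT hχ hχ1 hf hid hβ hC0 p hfb hsmall
      (M := 0) le_rfl 0 hk (by omega)
    exact ⟨M', hM'0, fun j hj z hz => by interval_cases j; exact hM' z hz⟩
  | succ k ih =>
    intro hk
    obtain ⟨M, hM0, hM⟩ := ih (by omega)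
    obtain ⟨M', hM'0, hM'⟩ := DG_top hS hT hG hGT hχ hχ1 hf hid hβ hC0 p hfb hsmall
      hM0 (k+1) hk (fun l hl => hM l (by omega))
    refine ⟨max M M', le_max_of_le_left hM0, ?_⟩
    intro j hj z hz
    have hχz := hχ z hz
    rcases Nat.lt_or_ge j (k+1) with h | h
    · exact (hM j (by omega) z hz).trans
        (mul_le_mul_of_nonneg_right (le_max_left _ _) (by positivity))
    · have : j = k+1 := by omega
      subst this
      exact (hM' z hz).trans
        (mul_le_mul_of_nonneg_right (le_max_right _ _) (by positivity))

set_option maxHeartbeats 1000000 in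
lemma Gsub_order {E : Type u} [NormedAddCommGroup E] [NormedSpace ℝ E]
    {S T : Set E} (hS : IsOpen S) (hT : IsOpen T)
    {G : E → E} (hG : ContDiffOn ℝ (⊤ : ℕ∞) G S) (hGT : Set.MapsTo G S T)
    {χ : E → ℝ} (hχ : ∀ z ∈ S, 0 < χ z) (hχ1 : ∀ z ∈ S, χ z ≤ 1)
    {f : E → E} (hf : ContDiffOn ℝ (⊤ : ℕ∞) f T)
    (hid : ∀ z ∈ S, G z = z - f (G z))
    {β : ℝ} (hβ : 1 ≤ β) {C : ℝ} (hC0 : 0 ≤ C) (p : ℕ) (hp : 1 ≤ p)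
    (hfb : ∀ i, i ≤ p → ∀ z ∈ S, ‖iteratedFDerivWithin ℝ i f T (G z)‖ ≤ C * χ z ^ (β - i))
    (hsmall : ∀ z ∈ S, C * χ z ^ (β - 1) ≤ 1/2) :
    ∀ k, k ≤ p → ∃ C', 0 ≤ C' ∧ ∀ z ∈ S,
      ‖iteratedFDerivWithin ℝ k (fun w => G w - w) S z‖ ≤ C' * χ z ^ (β - k) := by
  have htop : ((⊤ : ℕ∞) : WithTop ℕ∞) + 1 ≤ ((⊤ : ℕ∞) : WithTop ℕ∞) :=
    le_of_eq (by rw [← WithTop.coe_one, ← WithTop.coe_add, top_add])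
  set f' := fderivWithin ℝ f T with hf'def
  have hf' : ContDiffOn ℝ (⊤ : ℕ∞) f' T := hf.fderivWithin hT.uniqueDiffOn htop
  have heqn : EqOn (fun w => G w - w) (fun w => -((f ∘ G) w)) S := by
    intro w hw
    have h := hid w hw
    simp only [Function.comp_apply]
    nth_rewrite 1 [h]
    abel
  intro k hk
  match k with
  | 0 =>
    refine ⟨C, hC0, ?_⟩
    intro z hz
    rw [iteratedFDerivWithin_congr heqn hz 0]
    rw [norm_iteratedFDerivWithin_zero, norm_neg]
    have h := hfb 0 (by omega) z hz
    rw [norm_iteratedFDerivWithin_zero] at h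
    simpa using h
  | (j+1) =>
    obtain ⟨M, hM0, hM⟩ := DG_order hS hT hG hGT hχ hχ1 hf hid hβ hC0 p hfb hsmall j hk
    have hf'b : ∀ i, i ≤ j → ∀ z ∈ S,
        ‖iteratedFDerivWithin ℝ i f' T (G z)‖ ≤ C * χ z ^ ((β-1) - i) := by
      intro i hi z hz
      have h := hfb (i+1) (by omega) z hz
      rw [← norm_iteratedFDerivWithin_fderivWithin hT.uniqueDiffOn (hGT hz)] at h
      have harg : β - ((i+1:ℕ):ℝ) = (β - 1) - (i:ℝ) := by push_cast; ring
      rwa [harg] at h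
    obtain ⟨C₂, hC₂0, hC₂⟩ := comp_order hS hT hG hGT hχ hM0 j (fun l hl => hM l (by omega)) (E →L[ℝ] E) _ _ f' hf'
      (β-1) C hC0 hf'b
    refine ⟨2^j * (C₂ * M), by positivity, ?_⟩
    intro z hz
    have hχz := hχ z hz
    rw [iteratedFDerivWithin_congr heqn hz (j+1)]
    have hneg : iteratedFDerivWithin ℝ (j+1) (fun w => -((f ∘ G) w)) S z
        = -iteratedFDerivWithin ℝ (j+1) (f ∘ G) S z := by
      exact iteratedFDerivWithin_neg_apply hS.uniqueDiffOn hz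
    rw [hneg, norm_neg]
    rw [← norm_iteratedFDerivWithin_fderivWithin hS.uniqueDiffOn hz]
    have heq : EqOn (fderivWithin ℝ (f ∘ G) S)
        (fun y => (ContinuousLinearMap.compL ℝ E E E) ((f' ∘ G) y) (fderivWithin ℝ G S y)) S := by
      intro y hy
      exact fderivWithin_comp y ((hf.differentiableOn (by simp)) (G y) (hGT hy))
        ((hG.differentiableOn (by simp)) y hy) hGT (hS.uniqueDiffOn y hy)
    rw [iteratedFDerivWithin_congr heq hz j]
    have hbil := (ContinuousLinearMap.compL ℝ E E E).norm_iteratedFDerivWithin_le_of_bilinear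
      (f := f' ∘ G) (g := fderivWithin ℝ G S)
      (hf'.comp hG hGT) (hG.fderivWithin hS.uniqueDiffOn htop) hS.uniqueDiffOn hz (n := j) (by exact_mod_cast le_top)
    refine hbil.trans ?_
    have hsum0 : (0:ℝ) ≤ ∑ l ∈ Finset.range (j+1), (j.choose l : ℝ) *
        ‖iteratedFDerivWithin ℝ l (f' ∘ G) S z‖ *
        ‖iteratedFDerivWithin ℝ (j - l) (fderivWithin ℝ G S) S z‖ := by
      apply Finset.sum_nonneg; intro l _; positivity
    refine le_trans (mul_le_mul_of_nonneg_right
      (ContinuousLinearMap.norm_compL_le ℝ E E E) hsum0) ?_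
    rw [one_mul]
    have hterm : ∀ l ∈ Finset.range (j+1), (j.choose l : ℝ) *
        ‖iteratedFDerivWithin ℝ l (f' ∘ G) S z‖ *
        ‖iteratedFDerivWithin ℝ (j - l) (fderivWithin ℝ G S) S z‖
        ≤ (j.choose l : ℝ) * (C₂ * M * χ z ^ (β - ((j+1:ℕ):ℝ))) := by
      intro l hl
      rw [Finset.mem_range] at hl
      have h1 := hC₂ l (by omega) z hz
      have h2 := hM (j - l) (by omega) z hz
      have hcast : ((j - l : ℕ) : ℝ) = (j:ℝ) - l := by
        push_cast [Nat.cast_sub (by omega : l ≤ j)]; ring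
      rw [hcast] at h2
      have hprod : ‖iteratedFDerivWithin ℝ l (f' ∘ G) S z‖ *
          ‖iteratedFDerivWithin ℝ (j - l) (fderivWithin ℝ G S) S z‖
          ≤ (C₂ * χ z ^ ((β-1) - (l:ℝ))) * (M * χ z ^ (-((j:ℝ) - l))) :=
        mul_le_mul h1 h2 (norm_nonneg _) (by positivity)
      have hexp : χ z ^ ((β-1) - (l:ℝ)) * χ z ^ (-((j:ℝ) - l)) = χ z ^ (β - ((j+1:ℕ):ℝ)) := by
        rw [← Real.rpow_add hχz]
        congr 1
        push_cast; ring
      calc (j.choose l : ℝ) * ‖iteratedFDerivWithin ℝ l (f' ∘ G) S z‖ *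
            ‖iteratedFDerivWithin ℝ (j - l) (fderivWithin ℝ G S) S z‖
          = (j.choose l : ℝ) * (‖iteratedFDerivWithin ℝ l (f' ∘ G) S z‖ *
            ‖iteratedFDerivWithin ℝ (j - l) (fderivWithin ℝ G S) S z‖) := by ring
        _ ≤ (j.choose l : ℝ) * ((C₂ * χ z ^ ((β-1) - (l:ℝ))) * (M * χ z ^ (-((j:ℝ) - l)))) :=
            mul_le_mul_of_nonneg_left hprod (by positivity)
        _ = (j.choose l : ℝ) * (C₂ * M * (χ z ^ ((β-1) - (l:ℝ)) * χ z ^ (-((j:ℝ) - l)))) := by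
            ring
        _ = (j.choose l : ℝ) * (C₂ * M * χ z ^ (β - ((j+1:ℕ):ℝ))) := by rw [hexp]
    refine le_trans (Finset.sum_le_sum hterm) ?_
    rw [← Finset.sum_mul]
    have hchoose : (∑ l ∈ Finset.range (j+1), (j.choose l : ℝ)) = (2:ℝ)^j := by
      exact_mod_cast congrArg (Nat.cast : ℕ → ℝ) (Nat.sum_range_choose j)
    rw [hchoose]
    have : (2:ℝ)^j * (C₂ * M * χ z ^ (β - ((j+1:ℕ):ℝ)))
        = (2^j * (C₂ * M)) * χ z ^ (β - ((j+1:ℕ):ℝ)) := by ring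
    rw [this]


lemma sector_isOpen {a b r₁ r₂ : ℝ} {n : ℕ} (hb : b ≤ Real.pi) :
    IsOpen (Sector a b r₁ r₂ n) := by
  rw [isOpen_iff_mem_nhds]
  rintro z ⟨h0, h1, h2, h3⟩
  have e0 : ∀ᶠ w : ℂ × (Fin n → ℂ) in nhds z, w.1 ≠ 0 :=
    continuousAt_fst.eventually_ne h0
  have e1 : ∀ᶠ w : ℂ × (Fin n → ℂ) in nhds z, ‖w.1‖ < r₁ :=
    (continuousAt_fst.norm).eventually_lt continuousAt_const h1
  have e2 : ∀ᶠ w : ℂ × (Fin n → ℂ) in nhds z, ‖w.2‖ < r₂ :=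
    (continuousAt_snd.norm).eventually_lt continuousAt_const h2
  have e3 : ∀ᶠ w : ℂ × (Fin n → ℂ) in nhds z,
      ((a = -Real.pi ∧ b = Real.pi) ∨ (a < w.1.arg ∧ w.1.arg < b)) := by
    rcases h3 with hP | hQ
    · exact Filter.Eventually.of_forall fun w => Or.inl hP
    · have hslit : z.1 ∈ Complex.slitPlane := by
        rw [Complex.mem_slitPlane_iff]
        by_contra h
        push_neg at h
        obtain ⟨hre, him⟩ := h
        have hre' : z.1.re < 0 := by
          rcases lt_or_eq_of_le hre with h | h
          · exact h
          · exact absurd (Complex.ext (by simpa using h) (by simpa using him)) h0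
        have hpi : z.1.arg = Real.pi := Complex.arg_eq_pi_iff.mpr ⟨hre', him⟩
        have hlt : z.1.arg < Real.pi := lt_of_lt_of_le hQ.2 hb
        rw [hpi] at hlt
        exact lt_irrefl _ hlt
      have hc : ContinuousAt (fun w : ℂ × (Fin n → ℂ) => w.1.arg) z :=
        (Complex.continuousAt_arg hslit).comp continuousAt_fst
      have := hc.eventually_mem (isOpen_Ioo.mem_nhds (⟨hQ.1, hQ.2⟩ : z.1.arg ∈ Ioo a b))
      filter_upwards [this] with w hw
      exact Or.inr ⟨hw.1, hw.2⟩
  filter_upwards [e0, e1, e2, e3] with w h0' h1' h2' h3'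
  exact ⟨h0', h1', h2', h3'⟩

lemma IsOrderOn.uniform {n : ℕ} {W : Type*} [NormedAddCommGroup W] [NormedSpace ℝ W]
    {V : Set (ℂ × (Fin n → ℂ))} {f : ℂ × (Fin n → ℂ) → W} {α : ℝ} {p : ℕ}
    (h : IsOrderOn V f α p) (hV : ∀ z ∈ V, z.1 ≠ 0) :
    ∃ C ε : ℝ, 0 < ε ∧ 0 ≤ C ∧ ∀ k, k ≤ p → ∀ z ∈ V, ‖z‖ < ε →
      ‖iteratedFDerivWithin ℝ k f V z‖ ≤ C * ‖z.1‖ ^ (α - k) := by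
  have h' : ∀ k : Fin (p+1), ∃ Cε : ℝ × ℝ, 0 < Cε.2 ∧ ∀ z ∈ V, ‖z‖ < Cε.2 →
      ‖z.1‖ ^ ((k : ℝ) - α) * ‖iteratedFDerivWithin ℝ (k:ℕ) f V z‖ ≤ Cε.1 := by
    intro k
    obtain ⟨C, ε, hε, hC⟩ := h k (by omega)
    exact ⟨(C, ε), hε, hC⟩
  choose g hg1 hg2 using h'
  set ε := Finset.univ.inf' (Finset.univ_nonempty) (fun k : Fin (p+1) => (g k).2) with hεdef
  set C := max 0 (Finset.univ.sup' (Finset.univ_nonempty) (fun k : Fin (p+1) => (g k).1)) with hCdef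
  refine ⟨C, ε, ?_, le_max_left _ _, ?_⟩
  · rw [hεdef, Finset.lt_inf'_iff]
    exact fun k _ => hg1 k
  · intro k hk z hz hznorm
    have hχ : 0 < ‖z.1‖ := norm_pos_iff.mpr (hV z hz)
    set k' : Fin (p+1) := ⟨k, by omega⟩
    have hε_le : ε ≤ (g k').2 := Finset.inf'_le _ (Finset.mem_univ k')
    have hC_ge : (g k').1 ≤ C :=
      le_max_of_le_right (Finset.le_sup' (fun k : Fin (p+1) => (g k).1) (Finset.mem_univ k'))
    have hb := hg2 k' z hz (lt_of_lt_of_le hznorm hε_le)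
    have hb' : ‖z.1‖ ^ ((k : ℝ) - α) * ‖iteratedFDerivWithin ℝ k f V z‖ ≤ C :=
      le_trans hb hC_ge
    have key : ‖iteratedFDerivWithin ℝ k f V z‖
        = (‖z.1‖ ^ ((k : ℝ) - α) * ‖iteratedFDerivWithin ℝ k f V z‖) * ‖z.1‖ ^ (α - (k:ℝ)) := by
      rw [mul_comm (‖z.1‖ ^ ((k : ℝ) - α)) _, mul_assoc, ← Real.rpow_add hχ]
      norm_num
    rw [key]
    exact mul_le_mul_of_nonneg_right hb' (Real.rpow_nonneg (norm_nonneg _) _)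

lemma small_pow {A B γ : ℝ} (hA : 0 ≤ A) (hB : 0 < B) (hγ : 0 < γ) :
    ∃ ρ, 0 < ρ ∧ ∀ x, 0 ≤ x → x ≤ ρ → A * x ^ γ ≤ B := by
  refine ⟨(B/(A+1)) ^ (1/γ), Real.rpow_pos_of_pos (by positivity) _, ?_⟩
  intro x hx0 hxρ
  have h1 : x ^ γ ≤ ((B/(A+1)) ^ (1/γ)) ^ γ := Real.rpow_le_rpow hx0 hxρ hγ.le
  have h2 : ((B/(A+1)) ^ (1/γ)) ^ γ = B/(A+1) := by
    rw [← Real.rpow_mul (by positivity : (0:ℝ) ≤ B/(A+1)), one_div,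
      inv_mul_cancel₀ (ne_of_gt hγ), Real.rpow_one]
  have h5 : A * x ^ γ ≤ A * (B/(A+1)) :=
    mul_le_mul_of_nonneg_left (h1.trans_eq h2) hA
  have h3 : A * (B/(A+1)) ≤ (A+1) * (B/(A+1)) :=
    mul_le_mul_of_nonneg_right (by linarith) (by positivity)
  have h4 : (A+1) * (B/(A+1)) = B := by field_simp
  linarith





set_option maxHeartbeats 1000000 in
/-- if `F` is a diffeomorphism of order `(β, p)` on `V = V(a,b,r₁,r₂,n)` with
`β > 1` and `p ≥ 1`, then some smaller sector `V(a,b,r₁′,r₂′,n)` is contained in the image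
`F(V)`, and the inverse map `G = F⁻¹` is a diffeomorphism of order `(β, p)` there. -/
theorem stmt15 (n : ℕ) (a b r₁ r₂ β : ℝ) (p : ℕ)
    (hab : -Real.pi ≤ a) (hab' : a < b) (hb : b ≤ Real.pi)
    (hr₁ : 0 < r₁) (hr₂ : 0 < r₂) (hβ : 1 < β) (hp : 1 ≤ p)
    (F : ℂ × (Fin n → ℂ) → ℂ × (Fin n → ℂ))
    (hF : IsDiffeoOrder (Sector a b r₁ r₂ n) F β p) :
    ∃ r₁' r₂' : ℝ, 0 < r₁' ∧ r₁' ≤ r₁ ∧ 0 < r₂' ∧ r₂' ≤ r₂ ∧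
      Sector a b r₁' r₂' n ⊆ F '' (Sector a b r₁ r₂ n) ∧
      ∃ G : ℂ × (Fin n → ℂ) → ℂ × (Fin n → ℂ),
        (∀ z ∈ Sector a b r₁' r₂' n, G z ∈ Sector a b r₁ r₂ n ∧ F (G z) = z) ∧
        IsDiffeoOrder (Sector a b r₁' r₂' n) G β p := by
  classical
  obtain ⟨hFs, hFinj, hFx, hford⟩ := hF
  set T : Set (ℂ × (Fin n → ℂ)) := Sector a b r₁ r₂ n with hTdef
  have hTopen : IsOpen T := sector_isOpen hb
  set f : ℂ × (Fin n → ℂ) → ℂ × (Fin n → ℂ) := fun z => F z - z with hfdef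
  have hfs : ContDiffOn ℝ (⊤ : ℕ∞) f T := hFs.sub contDiffOn_id
  obtain ⟨C, ε, hε, hC0, hbound⟩ := IsOrderOn.uniform hford (fun z hz => hz.1)
  obtain ⟨ρ₁, hρ₁pos, hρ₁⟩ := small_pow hC0 (by norm_num : (0:ℝ) < 1/2)
    (by linarith : (0:ℝ) < β - 1)
  set r₂' : ℝ := min (min r₂ ε) 1 / 4 with hr₂'def
  have hmin1pos : 0 < min (min r₂ ε) 1 := lt_min (lt_min hr₂ hε) one_pos
  have hr₂'pos : 0 < r₂' := by rw [hr₂'def]; linarith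
  obtain ⟨ρ₂, hρ₂pos, hρ₂⟩ := small_pow hC0 hr₂'pos (by linarith : (0:ℝ) < β)
  set r₁' : ℝ := min (min r₁ 1) (min ε (min ρ₁ ρ₂)) with hr₁'def
  have hr₁'pos : 0 < r₁' :=
    lt_min (lt_min hr₁ one_pos) (lt_min hε (lt_min hρ₁pos hρ₂pos))
  set R : ℝ := 2 * r₂' with hRdef
  set S : Set (ℂ × (Fin n → ℂ)) := Sector a b r₁' r₂' n with hSdef
  have hSopen : IsOpen S := sector_isOpen hb
  have hr₁'le : r₁' ≤ r₁ := le_trans (min_le_left _ _) (min_le_left _ _)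
  have hr₁'1 : r₁' ≤ 1 := le_trans (min_le_left _ _) (min_le_right _ _)
  have hr₁'ε : r₁' ≤ ε := le_trans (min_le_right _ _) (min_le_left _ _)
  have hr₁'ρ₁ : r₁' ≤ ρ₁ :=
    le_trans (min_le_right _ _) (le_trans (min_le_right _ _) (min_le_left _ _))
  have hr₁'ρ₂ : r₁' ≤ ρ₂ :=
    le_trans (min_le_right _ _) (le_trans (min_le_right _ _) (min_le_right _ _))
  have hr₂'le : r₂' ≤ r₂ := by
    have : min (min r₂ ε) 1 ≤ r₂ := le_trans (min_le_left _ _) (min_le_left _ _)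
    rw [hr₂'def]; linarith
  have hRr₂ : R < r₂ := by
    have : min (min r₂ ε) 1 ≤ r₂ := le_trans (min_le_left _ _) (min_le_left _ _)
    rw [hRdef, hr₂'def]; linarith
  have hRε : R < ε := by
    have : min (min r₂ ε) 1 ≤ ε := le_trans (min_le_left _ _) (min_le_right _ _)
    rw [hRdef, hr₂'def]; linarith
  have hR0 : 0 < R := by rw [hRdef]; linarith
  -- slices around points of S remain in T and in the ε-ball
  have hslice : ∀ w ∈ S, ∀ y : Fin n → ℂ, ‖y‖ ≤ R →
      ((w.1, y) : ℂ × (Fin n → ℂ)) ∈ T ∧ ‖((w.1, y) : ℂ × (Fin n → ℂ))‖ < ε := by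
    rintro w ⟨hw0, hw1, hw2, hw3⟩ y hyR
    constructor
    · exact ⟨hw0, lt_of_lt_of_le hw1 hr₁'le, lt_of_le_of_lt hyR hRr₂, hw3⟩
    · rw [Prod.norm_def]
      exact max_lt (lt_of_lt_of_le hw1 hr₁'ε) (lt_of_le_of_lt hyR hRε)
  -- the derivative of f is small
  have hDf : ∀ z ∈ T, ‖z‖ < ε → ‖z.1‖ ≤ r₁' → ‖fderiv ℝ f z‖ ≤ 1/2 := by
    intro z hz hznorm hz1
    have h1 := hbound 1 hp z hz hznorm
    have h2 : ‖fderiv ℝ f z‖ = ‖iteratedFDerivWithin ℝ 1 f T z‖ := by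
      rw [← fderivWithin_of_isOpen hTopen hz,
        ← norm_iteratedFDerivWithin_fderivWithin (𝕜 := ℝ) (f := f) (n := 0) hTopen.uniqueDiffOn hz,
        norm_iteratedFDerivWithin_zero]
    rw [h2]
    refine h1.trans ?_
    have : β - ((1:ℕ):ℝ) = β - 1 := by norm_num
    rw [this]
    exact hρ₁ _ (norm_nonneg _) (le_trans hz1 hr₁'ρ₁)
  -- surjectivity via the contraction mapping principle on each slice
  have hsurj : ∀ w ∈ S, ∃ z, z ∈ T ∧ ‖z.2‖ ≤ R ∧ z.1 = w.1 ∧ F z = w := by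
    intro w hw
    obtain ⟨hw0, hw1, hw2, hw3⟩ := hw
    have hwS : w ∈ S := ⟨hw0, hw1, hw2, hw3⟩
    set x := w.1 with hxdef
    set K : Set (Fin n → ℂ) := closedBall 0 R with hKdef
    haveI : CompleteSpace K := isClosed_closedBall.completeSpace_coe
    haveI : Nonempty K := ⟨⟨0, mem_closedBall_self hR0.le⟩⟩
    have hmemK : ∀ y : Fin n → ℂ, y ∈ K ↔ ‖y‖ ≤ R := fun y => mem_closedBall_zero_iff
    have hg' : ∀ y ∈ K, HasFDerivWithinAt (fun y => f (x, y))
        ((fderiv ℝ f (x, y)).comp (ContinuousLinearMap.inr ℝ ℂ (Fin n → ℂ))) K y := by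
      intro y hy
      have hmem := (hslice w hwS y ((hmemK y).mp hy)).1
      have hdf : DifferentiableAt ℝ f (x, y) :=
        ((hfs (x,y) hmem).differentiableWithinAt (by simp)).differentiableAt (hTopen.mem_nhds hmem)
      have hpair : HasFDerivAt (fun y : Fin n → ℂ => ((x, y) : ℂ × (Fin n → ℂ)))
          (ContinuousLinearMap.inr ℝ ℂ (Fin n → ℂ)) y := hasFDerivAt_prodMk_right x y
      exact (hdf.hasFDerivAt.comp y hpair).hasFDerivWithinAt
    have hgb : ∀ y ∈ K,
        ‖(fderiv ℝ f (x, y)).comp (ContinuousLinearMap.inr ℝ ℂ (Fin n → ℂ))‖ ≤ 1/2 := by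
      intro y hy
      obtain ⟨hmem, hnorm⟩ := hslice w hwS y ((hmemK y).mp hy)
      have h1 : ‖fderiv ℝ f (x,y)‖ ≤ 1/2 := hDf _ hmem hnorm hw1.le
      have hinr : ‖(ContinuousLinearMap.inr ℝ ℂ (Fin n → ℂ))‖ ≤ 1 := by
        refine ContinuousLinearMap.opNorm_le_bound _ zero_le_one (fun v => ?_)
        simp [Prod.norm_def]
      calc ‖(fderiv ℝ f (x, y)).comp (ContinuousLinearMap.inr ℝ ℂ (Fin n → ℂ))‖
          ≤ ‖fderiv ℝ f (x,y)‖ * ‖(ContinuousLinearMap.inr ℝ ℂ (Fin n → ℂ))‖ :=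
            ContinuousLinearMap.opNorm_comp_le _ _
        _ ≤ 1/2 := by nlinarith [norm_nonneg (fderiv ℝ f (x,y)),
            norm_nonneg (ContinuousLinearMap.inr ℝ ℂ (Fin n → ℂ))]
    have hlip : ∀ y ∈ K, ∀ y' ∈ K, ‖f (x, y) - f (x, y')‖ ≤ 1/2 * ‖y - y'‖ := by
      intro y hy y' hy'
      exact (convex_closedBall (0 : Fin n → ℂ) R).norm_image_sub_le_of_norm_hasFDerivWithin_le
        hg' hgb hy' hy
    have hself : ∀ y : Fin n → ℂ, ‖y‖ ≤ R → ‖w.2 - (f (x, y)).2‖ ≤ R := by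
      intro y hyR
      obtain ⟨hmem, hnorm⟩ := hslice w hwS y hyR
      have hf0 : ‖f (x,y)‖ ≤ C * ‖x‖ ^ (β - ((0:ℕ):ℝ)) := by
        have h := hbound 0 (by omega) _ hmem hnorm
        rwa [norm_iteratedFDerivWithin_zero] at h
      have hf0' : ‖f (x,y)‖ ≤ r₂' := by
        refine hf0.trans ?_
        have : β - ((0:ℕ):ℝ) = β := by norm_num
        rw [this]
        exact hρ₂ _ (norm_nonneg _) (le_trans hw1.le hr₁'ρ₂)
      have hsnd : ‖(f (x,y)).2‖ ≤ ‖f (x,y)‖ := by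
        rw [Prod.norm_def]; exact le_max_right _ _
      calc ‖w.2 - (f (x, y)).2‖ ≤ ‖w.2‖ + ‖(f (x, y)).2‖ := norm_sub_le _ _
        _ ≤ r₂' + r₂' := add_le_add (le_of_lt hw2) (hsnd.trans hf0')
        _ = R := by rw [hRdef]; ring
    set Φ : K → K := fun y => ⟨w.2 - (f (x, ↑y)).2,
      (hmemK _).mpr (hself ↑y ((hmemK _).mp y.2))⟩ with hΦdef
    have hcontr : ContractingWith (1/2 : NNReal) Φ := by
      constructor
      · rw [← NNReal.coe_lt_coe]; norm_num
      · apply LipschitzWith.of_dist_le_mul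
        intro y y'
        rw [Subtype.dist_eq, Subtype.dist_eq, dist_eq_norm, dist_eq_norm]
        have heq : (Φ y : Fin n → ℂ) - (Φ y' : Fin n → ℂ)
            = (f (x, (y' : Fin n → ℂ))).2 - (f (x, (y : Fin n → ℂ))).2 := by
          simp only [hΦdef]
          abel
        rw [heq]
        have h2 : (f (x, (y' : Fin n → ℂ))).2 - (f (x, (y : Fin n → ℂ))).2
            = ((f (x, (y' : Fin n → ℂ))) - (f (x, (y : Fin n → ℂ)))).2 := rfl
        have h3 : ‖(f (x, (y' : Fin n → ℂ))).2 - (f (x, (y : Fin n → ℂ))).2‖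
            ≤ ‖(f (x, (y' : Fin n → ℂ))) - (f (x, (y : Fin n → ℂ)))‖ := by
          rw [h2, Prod.norm_def]; exact le_max_right _ _
        refine h3.trans ?_
        refine (hlip _ y'.2 _ y.2).trans ?_
        have : ((1/2 : NNReal) : ℝ) = 1/2 := by norm_num
        rw [this]
        have : (y' : Fin n → ℂ) - (y : Fin n → ℂ) = -((y : Fin n → ℂ) - (y' : Fin n → ℂ)) := by abel
        rw [this, norm_neg]
    set ystar : K := ContractingWith.fixedPoint Φ hcontr with hystar
    have hfix : Φ ystar = ystar := hcontr.fixedPoint_isFixedPt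
    have hfixv : w.2 - (f (x, (ystar : Fin n → ℂ))).2 = (ystar : Fin n → ℂ) :=
      congrArg Subtype.val hfix
    have hmem := (hslice w hwS (ystar : Fin n → ℂ) ((hmemK _).mp ystar.2)).1
    refine ⟨(x, (ystar : Fin n → ℂ)), hmem, (hmemK _).mp ystar.2, rfl, ?_⟩
    have hfst : (F (x, (ystar : Fin n → ℂ))).1 = x := hFx _ hmem
    have hsnd : (F (x, (ystar : Fin n → ℂ))).2 = w.2 := by
      have h4 : (f (x, (ystar : Fin n → ℂ))).2
          = (F (x, (ystar : Fin n → ℂ))).2 - (ystar : Fin n → ℂ) := rfl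
      rw [h4] at hfixv
      have h5 := sub_eq_iff_eq_add.mp hfixv
      have h6 : (ystar : Fin n → ℂ) +
          ((F (x, (ystar : Fin n → ℂ))).2 - (ystar : Fin n → ℂ))
          = (F (x, (ystar : Fin n → ℂ))).2 := by abel
      rw [h6] at h5
      exact h5.symm
    exact Prod.ext hfst hsnd
  -- definition of the inverse map
  set G : (ℂ × (Fin n → ℂ)) → (ℂ × (Fin n → ℂ)) := fun w =>
    if h : ∃ z, z ∈ T ∧ ‖z.2‖ ≤ R ∧ z.1 = w.1 ∧ F z = w then h.choose else w with hGdef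
  have hGspec : ∀ w ∈ S, G w ∈ T ∧ ‖(G w).2‖ ≤ R ∧ (G w).1 = w.1 ∧ F (G w) = w := by
    intro w hw
    have h := hsurj w hw
    simp only [hGdef, dif_pos h]
    exact h.choose_spec
  -- smoothness of G via the inverse function theorem
  have hGdiff : ∀ z₀ ∈ S, ContDiffAt ℝ (⊤ : ℕ∞) G z₀ := by
    intro z₀ hz₀
    obtain ⟨hw₀T, hw₀R, hw₀1, hFw₀⟩ := hGspec z₀ hz₀
    have hw₀pair : G z₀ = (z₀.1, (G z₀).2) := by rw [← hw₀1]
    have hw₀ε : ‖G z₀‖ < ε := by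
      rw [hw₀pair]; exact (hslice z₀ hz₀ (G z₀).2 hw₀R).2
    have hcd : ContDiffAt ℝ (⊤ : ℕ∞) F (G z₀) := (hFs.contDiffAt (hTopen.mem_nhds hw₀T))
    have hdF : DifferentiableAt ℝ F (G z₀) := hcd.differentiableAt (by simp)
    have hdf : DifferentiableAt ℝ f (G z₀) := hdF.sub differentiableAt_id
    have hAle : ‖fderiv ℝ f (G z₀)‖ ≤ 1/2 := by
      refine hDf _ hw₀T hw₀ε ?_
      rw [hw₀1]
      exact hz₀.2.1.le
    have hA1 : ‖-(fderiv ℝ f (G z₀))‖ < 1 := by rw [norm_neg]; linarith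
    set U : ((ℂ × (Fin n → ℂ)) →L[ℝ] (ℂ × (Fin n → ℂ)))ˣ :=
      Units.oneSub _ hA1 with hUdef
    set e := ContinuousLinearEquiv.unitsEquiv ℝ (ℂ × (Fin n → ℂ)) U with hedef
    have hecoe : (e : (ℂ × (Fin n → ℂ)) →L[ℝ] (ℂ × (Fin n → ℂ))) = fderiv ℝ F (G z₀) := by
      have h1 : (e : (ℂ × (Fin n → ℂ)) →L[ℝ] (ℂ × (Fin n → ℂ)))
          = 1 - (-(fderiv ℝ f (G z₀))) := rfl
      have hFeq : F = fun z => f z + z := funext fun z => by simp [hfdef]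
      have h2 : fderiv ℝ F (G z₀) = fderiv ℝ f (G z₀) + fderiv ℝ (fun z => z) (G z₀) := by
        conv_lhs => rw [hFeq]
        exact fderiv_add hdf differentiableAt_id
      rw [h1, h2, sub_neg_eq_add, fderiv_id']
      rw [ContinuousLinearMap.one_def]
      abel
    have hFdAt : HasFDerivAt F
        ((e : (ℂ × (Fin n → ℂ)) ≃L[ℝ] (ℂ × (Fin n → ℂ))) :
          (ℂ × (Fin n → ℂ)) →L[ℝ] (ℂ × (Fin n → ℂ))) (G z₀) := by
      rw [hecoe]; exact hdF.hasFDerivAt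
    have hstrict := hcd.hasStrictFDerivAt' hFdAt (by simp)
    set φ := hcd.localInverse hFdAt (by simp) with hφdef
    have hφc : ContDiffAt ℝ (⊤ : ℕ∞) φ z₀ := by
      have := hcd.to_localInverse hFdAt (by simp)
      rwa [hFw₀] at this
    have hφeq : φ = hstrict.localInverse F e (G z₀) := rfl
    have hrinv : ∀ᶠ y in nhds z₀, F (φ y) = y := by
      have h := hstrict.eventually_right_inverse
      rw [hFw₀] at h
      rw [hφeq]
      exact h
    have hφcont : ContinuousAt φ z₀ := by
      have h := hstrict.localInverse_continuousAt
      rw [hFw₀] at h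
      rw [hφeq]
      exact h
    have hφz₀ : φ z₀ = G z₀ := by
      have h := hstrict.localInverse_apply_image
      rw [hFw₀] at h
      rw [hφeq]
      exact h
    have hφT : ∀ᶠ y in nhds z₀, φ y ∈ T := by
      refine hφcont.eventually_mem (hTopen.mem_nhds ?_)
      rw [hφz₀]; exact hw₀T
    have hSmem : ∀ᶠ y in nhds z₀, y ∈ S := hSopen.mem_nhds hz₀
    have hGeqφ : G =ᶠ[nhds z₀] φ := by
      filter_upwards [hrinv, hφT, hSmem] with y h1 h2 h3
      exact hFinj (hGspec y h3).1 h2 (by rw [(hGspec y h3).2.2.2, h1])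
    exact hφc.congr_of_eventuallyEq hGeqφ
  have hGsm : ContDiffOn ℝ (⊤ : ℕ∞) G S := fun z hz => (hGdiff z hz).contDiffWithinAt
  have hGT : Set.MapsTo G S T := fun z hz => (hGspec z hz).1
  have hid : ∀ z ∈ S, G z = z - f (G z) := by
    intro z hz
    have h := (hGspec z hz).2.2.2
    simp only [hfdef]
    rw [h]
    abel
  have hfb2 : ∀ i, i ≤ p → ∀ z ∈ S,
      ‖iteratedFDerivWithin ℝ i f T (G z)‖ ≤ C * ‖z.1‖ ^ (β - i) := by
    intro i hi z hz
    have h1 := (hGspec z hz).1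
    have hw₀pair : G z = (z.1, (G z).2) := by rw [← (hGspec z hz).2.2.1]
    have hε' : ‖G z‖ < ε := by
      rw [hw₀pair]; exact (hslice z hz _ (hGspec z hz).2.1).2
    have h := hbound i hi (G z) h1 hε'
    rwa [(hGspec z hz).2.2.1] at h
  have hχpos : ∀ z ∈ S, 0 < ‖z.1‖ := fun z hz => norm_pos_iff.mpr hz.1
  have hχ1 : ∀ z ∈ S, ‖z.1‖ ≤ 1 := fun z hz => le_trans hz.2.1.le hr₁'1
  have hsmall : ∀ z ∈ S, C * ‖z.1‖ ^ (β - 1) ≤ 1/2 := fun z hz =>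
    hρ₁ _ (norm_nonneg _) (le_trans hz.2.1.le hr₁'ρ₁)
  have horder := Gsub_order hSopen hTopen hGsm hGT hχpos hχ1 hfs hid hβ.le hC0 p hp hfb2 hsmall
  refine ⟨r₁', r₂', hr₁'pos, hr₁'le, hr₂'pos, hr₂'le, ?_, G, ?_, ?_⟩
  · intro w hw
    exact ⟨G w, (hGspec w hw).1, (hGspec w hw).2.2.2⟩
  · intro z hz
    exact ⟨(hGspec z hz).1, (hGspec z hz).2.2.2⟩
  · refine ⟨hGsm, ?_, fun z hz => (hGspec z hz).2.2.1, ?_⟩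
    · intro w1 h1 w2 h2 heq
      rw [← (hGspec w1 h1).2.2.2, ← (hGspec w2 h2).2.2.2, heq]
    · intro k hk
      obtain ⟨C', hC'0, hC'⟩ := horder k hk
      refine ⟨C', 1, one_pos, ?_⟩
      intro z hz _
      have hχz := hχpos z hz
      have h := hC' z hz
      calc ‖z.1‖ ^ ((k:ℝ) - β) * ‖iteratedFDerivWithin ℝ k (fun z => G z - z) S z‖
          ≤ ‖z.1‖ ^ ((k:ℝ) - β) * (C' * ‖z.1‖ ^ (β - (k:ℝ))) :=
            mul_le_mul_of_nonneg_left h (Real.rpow_nonneg (norm_nonneg _) _)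
        _ = C' * (‖z.1‖ ^ ((k:ℝ) - β) * ‖z.1‖ ^ (β - (k:ℝ))) := by ring
        _ = C' := by
            rw [← Real.rpow_add hχz]
            have : (k:ℝ) - β + (β - (k:ℝ)) = 0 := by ring
            rw [this, Real.rpow_zero, mul_one]
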